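/- Let Γ₀ be a maximally Log-consistent set. Then the canonical model M^c for Γ₀ is a problem-sensitive model: its domain [Γ₀]_⊞ is nonempty, ⊕^c = ∪ on 𝒫(Prop) is idempotent, commutative, associative and has unrestricted fusion, s^c is upward closed, and the relation R^c is serial on [Γ₀]_⊞ (every Δ ∈ [Γ₀]_⊞ has some Γ ∈ [Γ₀]_⊞ with Δ R^c Γ). -/

import Mathlib

/-!
Only seriality of `R^c` takes work. For `Δ` in the class of `Γ₀`, the set `Δ[I]` is
deductively closed: theorems are witnessed by `I⊤` (Ax1), and Ax4 conjoins the intentions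
witnessing `φ → χ` and `φ` into one witnessing `χ`. It is also consistent, since
`⊥ ∈ Δ[I]` gives `Iψ` with `⊞(ψ → ¬ψ)`, hence `I¬ψ` by Ax5 and Ax2 (`¬ψ` and `ψ` have the
same variables), contradicting Ax3. A Lindenbaum extension `Γ ⊇ Δ[I]` stays in the class,
as `Γ₀[⊞] ⊆ Δ[⊞] ⊆ Δ[I]` by the `4` axiom. The conditions on problems hold because
`(𝒫(Prop), ∪)` is a complete lattice.
-/

/-- Formulas of classical propositional logic `L_CPL` over a countable set
of atomic propositions (represented by natural numbers). -/
inductive CPL : Type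
  | top : CPL
  | atom : ℕ → CPL
  | neg : CPL → CPL
  | or : CPL → CPL → CPL
  | and : CPL → CPL → CPL
  deriving DecidableEq
/-- `Var(φ)`: the (finite) set of atomic propositions occurring in `φ`. -/
def CPL.var : CPL → Finset ℕ
  | .top => ∅
  | .atom p => {p}
  | .neg φ => φ.var
  | .or φ ψ => φ.var ∪ ψ.var
  | .and φ ψ => φ.var ∪ ψ.var

/-- `p̄ := p ∨ ¬p`. -/
def pbar (p : ℕ) : CPL := .or (.atom p) (.neg (.atom p))

/-- Conjunction of a list of `L_CPL` formulas (empty conjunction is `⊤`). -/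
def conjList : List CPL → CPL
  | [] => .top
  | [α] => α
  | α :: β :: rest => .and α (conjList (β :: rest))

/-- `φ̄ := ⋀_{p ∈ Var(φ)} (p ∨ ¬p)`, with the conjuncts taken in the fixed
(increasing) enumeration order of the atomic propositions. -/
def CPL.bar (φ : CPL) : CPL := conjList ((φ.var.sort (· ≤ ·)).map pbar)
/-- Formulas of the language `L_Int`, extending `L_CPL` (embedded via `of`) by
negation, disjunction, conjunction, the global modality `⊞` (`box`) and the
intention modality `I` (`int`), which applies only to `L_CPL` formulas. -/
inductive Form : Type
  | of : CPL → Form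
  | neg : Form → Form
  | or : Form → Form → Form
  | and : Form → Form → Form
  | box : Form → Form
  | int : CPL → Form
  deriving DecidableEq
/-- Material implication in `L_Int`: `φ → ψ := ¬φ ∨ ψ`. -/
def Form.imp (φ ψ : Form) : Form := .or (.neg φ) ψ

/-- Material biconditional in `L_Int`: `φ ↔ ψ := (φ → ψ) ∧ (ψ → φ)`. -/
def Form.iff (φ ψ : Form) : Form := .and (φ.imp ψ) (ψ.imp φ)

/-- `⊥ := ¬⊤`. -/
def Form.bot : Form := .neg (.of .top)

/-- Boolean evaluation of `L_CPL` formulas under a valuation of the atoms. -/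
def CPL.eval (v : ℕ → Bool) : CPL → Bool
  | .top => true
  | .atom p => v p
  | .neg φ => !φ.eval v
  | .or φ ψ => φ.eval v || ψ.eval v
  | .and φ ψ => φ.eval v && ψ.eval v

/-- Boolean evaluation of `L_Int` formulas, treating `⊞`- and `I`-formulas as
atoms (evaluated by `u`). -/
def Form.eval (v : ℕ → Bool) (u : Form → Bool) : Form → Bool
  | .of α => α.eval v
  | .neg φ => !φ.eval v u
  | .or φ ψ => φ.eval v u || ψ.eval v u
  | .and φ ψ => φ.eval v u && ψ.eval v u
  | .box φ => u (.box φ)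
  | .int α => u (.int α)

/-- Classical propositional tautologies of `L_Int` (with modal formulas
treated as atoms). -/
def Taut (φ : Form) : Prop := ∀ v u, φ.eval v u = true

/-- Derivability in the proof system `Log`: classical tautologies and Modus
Ponens; `S5` axioms and necessitation for `⊞`; and the intention axioms
Ax1: `I⊤`; Ax2: `Iφ → Iφ̄`; Ax3: `Iφ → ¬I¬φ`; Ax4: `(Iφ ∧ Iψ) ↔ I(φ ∧ ψ)`;
Ax5: `⊞(ψ → φ) → ((Iψ ∧ Iφ̄) → Iφ)`. -/
inductive Deriv : Set Form → Form → Prop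
  | prem {Γ : Set Form} {φ : Form} : φ ∈ Γ → Deriv Γ φ
  | taut {Γ : Set Form} {φ : Form} : Taut φ → Deriv Γ φ
  | mp {Γ : Set Form} {φ ψ : Form} :
      Deriv Γ (φ.imp ψ) → Deriv Γ φ → Deriv Γ ψ
  | boxK {Γ : Set Form} (φ ψ : Form) :
      Deriv Γ ((Form.box (φ.imp ψ)).imp ((Form.box φ).imp (Form.box ψ)))
  | boxT {Γ : Set Form} (φ : Form) : Deriv Γ ((Form.box φ).imp φ)
  | box5 {Γ : Set Form} (φ : Form) :
      Deriv Γ ((Form.neg (Form.box φ)).imp (Form.box (Form.neg (Form.box φ))))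
  | nec {Γ : Set Form} {φ : Form} : Deriv ∅ φ → Deriv Γ (Form.box φ)
  | ax1 {Γ : Set Form} : Deriv Γ (Form.int .top)
  | ax2 {Γ : Set Form} (α : CPL) :
      Deriv Γ ((Form.int α).imp (Form.int α.bar))
  | ax3 {Γ : Set Form} (α : CPL) :
      Deriv Γ ((Form.int α).imp (Form.neg (Form.int (CPL.neg α))))
  | ax4 {Γ : Set Form} (α β : CPL) :
      Deriv Γ ((Form.and (.int α) (.int β)).iff (Form.int (.and α β)))
  | ax5 {Γ : Set Form} (α β : CPL) :
      Deriv Γ ((Form.box ((Form.of β).imp (Form.of α))).imp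
        ((Form.and (.int β) (.int α.bar)).imp (Form.int α)))

/-- A set of formulas is `Log`-consistent if `⊥` is not derivable from it. -/
def LogConsistent (Γ : Set Form) : Prop := ¬ Deriv Γ Form.bot

/-- A maximally `Log`-consistent set: consistent with no proper consistent
extension. -/
def MCS (Γ : Set Form) : Prop :=
  LogConsistent Γ ∧ ∀ Δ, LogConsistent Δ → Γ ⊆ Δ → Δ = Γ
/-- `Γ[⊞] = {φ : ⊞φ ∈ Γ}`. -/
def boxSet (Γ : Set Form) : Set Form := {φ | Form.box φ ∈ Γ}

/-- `Γ[I] = {φ ∈ L_Int : Iψ ∧ ⊞(ψ → φ) ∈ Γ for some ψ ∈ L_CPL}`. -/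
def intSet (Γ : Set Form) : Set Form :=
  {φ | ∃ ψ : CPL, Form.and (Form.int ψ) (Form.box ((Form.of ψ).imp φ)) ∈ Γ}
/-- `[Γ₀]_⊞`: the `∼⊞`-equivalence class of `Γ₀`, i.e. the maximally
`Log`-consistent sets `Δ` with `Γ₀[⊞] ⊆ Δ`. -/
def canonDomain (Γ₀ : Set Form) : Set (Set Form) :=
  {Δ | MCS Δ ∧ boxSet Γ₀ ⊆ Δ}
/-- The data of a problem-sensitive model: worlds, a conative relation, a set
of decision problems with a fusion operation and a solution assignment for
atoms, a problem assignment `f`, and a valuation `V`. -/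
structure PreModel where
  W : Type
  R : W → W → Prop
  P : Type
  fuse : P → P → P
  satom : ℕ → Set P
  f : W → P
  V : ℕ → Set W

/-- The extension of the solution assignment to the whole language `L_CPL`. -/
def PreModel.sol (M : PreModel) : CPL → Set M.P
  | .top => Set.univ
  | .atom p => M.satom p
  | .neg φ => M.sol φ
  | .or φ ψ => M.sol φ ∩ M.sol ψ
  | .and φ ψ => {c | ∃ a ∈ M.sol φ, ∃ b ∈ M.sol ψ, c = M.fuse a b}

/-- Classical satisfaction of `L_CPL` formulas at a world. -/
def PreModel.satCPL (M : PreModel) : M.W → CPL → Prop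
  | _, .top => True
  | w, .atom p => w ∈ M.V p
  | w, .neg φ => ¬ M.satCPL w φ
  | w, .or φ ψ => M.satCPL w φ ∨ M.satCPL w ψ
  | w, .and φ ψ => M.satCPL w φ ∧ M.satCPL w ψ

/-- Satisfaction of `L_Int` formulas: Boolean clauses are classical,
`M,w ⊨ ⊞φ` iff `φ` holds at every world, and `M,w ⊨ Iα` iff `α` holds at
every conative alternative of `w` and `f(w) ∈ s(α)`. -/
def PreModel.sat (M : PreModel) : M.W → Form → Prop
  | w, .of α => M.satCPL w α
  | w, .neg φ => ¬ M.sat w φ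
  | w, .or φ ψ => M.sat w φ ∨ M.sat w ψ
  | w, .and φ ψ => M.sat w φ ∧ M.sat w ψ
  | _, .box φ => ∀ v, M.sat v φ
  | w, .int α => (∀ v, M.R w v → M.satCPL v α) ∧ M.f w ∈ M.sol α

/-- A problem-sensitive model: a nonempty set of worlds, a serial conative
relation, a problems model (nonempty carrier; idempotent, commutative,
associative fusion with unrestricted fusion; upward-closed solution
assignment), a problem assignment, and a valuation. -/
structure PSModel extends PreModel where
  Wnonempty : Nonempty W
  serial : ∀ w, ∃ v, R w v
  Pnonempty : Nonempty P
  idem : ∀ a, fuse a a = a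
  comm : ∀ a b, fuse a b = fuse b a
  assoc : ∀ a b c, fuse (fuse a b) c = fuse a (fuse b c)
  fusion : ∀ A : Set P, ∃ a, (∀ x ∈ A, fuse x a = a) ∧
    ∀ b, (∀ x ∈ A, fuse x b = b) → fuse a b = b
  upward : ∀ (p : ℕ) (a b : P), fuse a b = b → a ∈ satom p → b ∈ satom p
/-- The data of the canonical model for `Γ₀`: worlds are the members of
`[Γ₀]_⊞`; `Δ R^c Γ` iff `Δ[I] ⊆ Γ`; `P^c = 𝒫(Prop)` with fusion `∪` and
`s^c(p) = {A : p ∈ A}`; `f^c(Δ) = {p : Ip̄ ∈ Δ}`; `V^c(p) = {Δ : p ∈ Δ}`. -/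
def canonPre (Γ₀ : Set Form) : PreModel where
  W := {Δ : Set Form // Δ ∈ canonDomain Γ₀}
  R := fun Δ Γ => intSet Δ.1 ⊆ Γ.1
  P := Set ℕ
  fuse := fun A B => A ∪ B
  satom := fun p => {A | p ∈ A}
  f := fun Δ => {p | Form.int (pbar p) ∈ Δ.1}
  V := fun p => {Δ | Form.of (.atom p) ∈ Δ.1}

namespace Deriv

variable {Γ Δ : Set Form} {φ ψ χ : Form} {α β : CPL}

theorem closure_induction {motive : Form → Prop} (prem : ∀ φ ∈ Γ, motive φ)
    (thm : ∀ φ, (∀ Δ, Deriv Δ φ) → motive φ)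
    (mp : ∀ φ ψ, motive (φ.imp ψ) → motive φ → motive ψ) (h : Deriv Γ φ) : motive φ := by
  induction h with
  | prem h => exact prem _ h
  | mp _ _ ih₁ ih₂ => exact mp _ _ (ih₁ prem) (ih₂ prem)
  | taut h => exact thm _ fun _ => .taut h
  | boxK φ ψ => exact thm _ fun _ => .boxK φ ψ
  | boxT φ => exact thm _ fun _ => .boxT φ
  | box5 φ => exact thm _ fun _ => .box5 φ
  | nec h => exact thm _ fun _ => .nec h
  | ax1 => exact thm _ fun _ => .ax1
  | ax2 α => exact thm _ fun _ => .ax2 α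
  | ax3 α => exact thm _ fun _ => .ax3 α
  | ax4 α β => exact thm _ fun _ => .ax4 α β
  | ax5 α β => exact thm _ fun _ => .ax5 α β

theorem mono (h : Deriv Γ φ) (hΓΔ : Γ ⊆ Δ) : Deriv Δ φ :=
  h.closure_induction (fun _ hφ => .prem (hΓΔ hφ)) (fun _ hφ => hφ Δ) fun _ _ => .mp

theorem of_insert (hφ : Deriv Γ φ) (h : Deriv (insert φ Γ) ψ) : Deriv Γ ψ :=
  h.closure_induction (fun _ hψ => (Set.mem_insert_iff.1 hψ).elim (· ▸ hφ) .prem)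
    (fun _ hψ => hψ Γ) fun _ _ => .mp

theorem exists_mem_of_sUnion {c : Set (Set Form)} (hc : IsChain (· ⊆ ·) c)
    (hne : c.Nonempty) (h : Deriv (⋃₀ c) φ) : ∃ T ∈ c, Deriv T φ := by
  refine h.closure_induction (motive := fun φ => ∃ T ∈ c, Deriv T φ) (fun _ hφ => ?_)
    (fun _ hφ => ?_) fun _ _ ⟨T₁, h₁, hd₁⟩ ⟨T₂, h₂, hd₂⟩ => ?_
  · obtain ⟨T, hT, hφT⟩ := Set.mem_sUnion.1 hφ
    exact ⟨T, hT, .prem hφT⟩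
  · exact ⟨hne.some, hne.some_mem, hφ _⟩
  · obtain ⟨T, hT, hT₁, hT₂⟩ := hc.directedOn T₁ h₁ T₂ h₂
    exact ⟨T, hT, .mp (hd₁.mono hT₁) (hd₂.mono hT₂)⟩

theorem mp_taut (ht : Taut (φ.imp ψ)) (h : Deriv Γ φ) : Deriv Γ ψ :=
  .mp (.taut ht) h

theorem mp_taut₂ (ht : Taut (φ.imp (ψ.imp χ))) (h₁ : Deriv Γ φ) (h₂ : Deriv Γ ψ) :
    Deriv Γ χ :=
  .mp (mp_taut ht h₁) h₂

theorem and_intro (h₁ : Deriv Γ φ) (h₂ : Deriv Γ ψ) : Deriv Γ (φ.and ψ) :=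
  mp_taut₂ (fun v u => by simp only [Form.imp, Form.eval]; grind) h₁ h₂

theorem and_left (h : Deriv Γ (φ.and ψ)) : Deriv Γ φ :=
  mp_taut (fun v u => by simp only [Form.imp, Form.eval]; grind) h

theorem and_right (h : Deriv Γ (φ.and ψ)) : Deriv Γ ψ :=
  mp_taut (fun v u => by simp only [Form.imp, Form.eval]; grind) h

theorem absurd (h₁ : Deriv Γ φ) (h₂ : Deriv Γ φ.neg) : Deriv Γ Form.bot :=
  mp_taut₂ (fun v u => by simp only [Form.imp, Form.bot, Form.eval, CPL.eval]; grind) h₁ h₂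

theorem box_mp (h₁ : Deriv Γ (φ.imp ψ).box) (h₂ : Deriv Γ φ.box) : Deriv Γ ψ.box :=
  .mp (.mp (.boxK φ ψ) h₁) h₂

theorem box_imp_of_box (h : Deriv Γ φ.box) : Deriv Γ (ψ.imp φ).box :=
  box_mp (.nec (.taut fun v u => by simp only [Form.imp, Form.eval]; grind)) h

/-- `4`, from `T` and `5` applied to `¬⊞φ`. -/
theorem box_box (h : Deriv Γ φ.box) : Deriv Γ φ.box.box := by
  have hdiamond : Deriv Γ φ.box.neg.box.neg :=
    mp_taut₂ (fun v u => by simp only [Form.imp, Form.eval]; grind) (.boxT φ.box.neg) h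
  have hbox_diamond : Deriv Γ φ.box.neg.box.neg.box := .mp (.box5 φ.box.neg) hdiamond
  have hdiamond_box : Deriv ∅ (φ.box.neg.box.neg.imp φ.box) :=
    mp_taut (fun v u => by simp only [Form.imp, Form.eval]; grind) (.box5 φ)
  exact box_mp (.nec hdiamond_box) hbox_diamond

theorem int_and (h₁ : Deriv Γ (.int α)) (h₂ : Deriv Γ (.int β)) : Deriv Γ (.int (α.and β)) :=
  .mp (and_left (.ax4 α β)) (and_intro h₁ h₂)

end Deriv

theorem exists_mcs_superset {S : Set Form} (h : LogConsistent S) : ∃ Γ, MCS Γ ∧ S ⊆ Γ := by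
  obtain ⟨Γ, hSΓ, hΓ⟩ := zorn_subset_nonempty {T | LogConsistent T}
    (fun c hc hchain hne => ⟨⋃₀ c, fun hbot =>
      let ⟨T, hT, hbotT⟩ := hbot.exists_mem_of_sUnion hchain hne
      hc hT hbotT, fun _ => Set.subset_sUnion_of_mem⟩) S h
  exact ⟨Γ, ⟨hΓ.prop, fun Δ hΔ hΓΔ => (hΓ.eq_of_subset hΔ hΓΔ).symm⟩, hSΓ⟩

namespace MCS

variable {Γ Δ : Set Form} {φ : Form}

theorem mem_of_deriv (hΓ : MCS Γ) (h : Deriv Γ φ) : φ ∈ Γ :=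
  hΓ.2 (insert φ Γ) (fun hbot => hΓ.1 (h.of_insert hbot)) (Set.subset_insert φ Γ) ▸
    Set.mem_insert φ Γ

theorem boxSet_subset (hΓ : MCS Γ) : boxSet Γ ⊆ Γ :=
  fun φ hφ => hΓ.mem_of_deriv (.mp (.boxT φ) (.prem hφ))

theorem boxSet_subset_boxSet (hΓ : MCS Γ) (h : boxSet Γ ⊆ Δ) : boxSet Γ ⊆ boxSet Δ :=
  fun _ hφ => h (hΓ.mem_of_deriv (Deriv.box_box (.prem hφ)))

theorem mem_intSet_iff (hΔ : MCS Δ) : φ ∈ intSet Δ ↔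
    ∃ ψ : CPL, Deriv Δ (.int ψ) ∧ Deriv Δ ((Form.of ψ).imp φ).box :=
  ⟨fun ⟨ψ, hψ⟩ => ⟨ψ, Deriv.and_left (.prem hψ), Deriv.and_right (.prem hψ)⟩,
    fun ⟨ψ, hI, hbox⟩ => ⟨ψ, hΔ.mem_of_deriv (hI.and_intro hbox)⟩⟩

theorem boxSet_subset_intSet (hΔ : MCS Δ) : boxSet Δ ⊆ intSet Δ := fun _ hφ =>
  (hΔ.mem_intSet_iff).2 ⟨.top, .ax1, Deriv.box_imp_of_box (.prem hφ)⟩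

theorem mem_intSet_of_deriv (hΔ : MCS Δ) (h : Deriv (intSet Δ) φ) : φ ∈ intSet Δ := by
  refine h.closure_induction (fun _ => id) (fun φ hφ => ?_) fun _ _ hφχ hφ => ?_
  · exact (hΔ.mem_intSet_iff).2 ⟨.top, .ax1, Deriv.box_imp_of_box (.nec (hφ ∅))⟩
  · obtain ⟨ψ₁, hI₁, hbox₁⟩ := (hΔ.mem_intSet_iff).1 hφχ
    obtain ⟨ψ₂, hI₂, hbox₂⟩ := (hΔ.mem_intSet_iff).1 hφ
    refine (hΔ.mem_intSet_iff).2 ⟨ψ₁.and ψ₂, hI₁.int_and hI₂, ?_⟩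
    refine Deriv.box_mp (Deriv.box_mp (.nec (.taut fun v u => ?_)) hbox₁) hbox₂
    simp only [Form.imp, Form.eval, CPL.eval]; grind

theorem intSet_consistent (hΔ : MCS Δ) : LogConsistent (intSet Δ) := fun hbot => by
  obtain ⟨ψ, hI, hbox⟩ := (hΔ.mem_intSet_iff).1 (hΔ.mem_intSet_of_deriv hbot)
  have himp_neg : Deriv Δ ((Form.of ψ).imp (.of ψ.neg)).box := Deriv.box_mp
    (.nec (.taut fun v u => by simp only [Form.imp, Form.bot, Form.eval, CPL.eval]; grind)) hbox
  have hbar : Deriv Δ (.int ψ.neg.bar) := .mp (.ax2 ψ) hI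
  have hI_neg : Deriv Δ (.int ψ.neg) := .mp (.mp (.ax5 ψ.neg ψ) himp_neg) (hI.and_intro hbar)
  exact hΔ.1 (hI_neg.absurd (.mp (.ax3 ψ) hI))

end MCS

theorem exists_sup_fusion {α : Type*} [CompleteLattice α] (A : Set α) :
    ∃ a, (∀ x ∈ A, x ⊔ a = a) ∧ ∀ b, (∀ x ∈ A, x ⊔ b = b) → a ⊔ b = b :=
  ⟨sSup A, fun _ hx => sup_eq_right.2 (le_sSup hx),
    fun _ hb => sup_eq_right.2 (sSup_le fun x hx => sup_eq_right.1 (hb x hx))⟩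

section canonical

variable {Γ₀ Δ : Set Form}

theorem mem_canonDomain_self (hΓ₀ : MCS Γ₀) : Γ₀ ∈ canonDomain Γ₀ :=
  ⟨hΓ₀, hΓ₀.boxSet_subset⟩

theorem exists_intSet_subset_of_mem_canonDomain (hΓ₀ : MCS Γ₀) (hΔ : Δ ∈ canonDomain Γ₀) :
    ∃ Γ ∈ canonDomain Γ₀, intSet Δ ⊆ Γ := by
  obtain ⟨Γ, hΓ, hΔΓ⟩ := exists_mcs_superset hΔ.1.intSet_consistent
  refine ⟨Γ, ⟨hΓ, ?_⟩, hΔΓ⟩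
  calc boxSet Γ₀ ⊆ boxSet Δ := hΓ₀.boxSet_subset_boxSet hΔ.2
    _ ⊆ intSet Δ := hΔ.1.boxSet_subset_intSet
    _ ⊆ Γ := hΔΓ

end canonical

/-- For any maximally `Log`-consistent `Γ₀`, the canonical model
for `Γ₀` is a problem-sensitive model: its domain `[Γ₀]_⊞` is nonempty,
`⊕^c = ∪` is idempotent, commutative, associative with unrestricted fusion,
`s^c` is upward closed, and `R^c` is serial on `[Γ₀]_⊞`. -/
theorem canonical_model_is_PSModel (Γ₀ : Set Form) (hΓ₀ : MCS Γ₀) :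
    ∃ M : PSModel, M.toPreModel = canonPre Γ₀ :=
  ⟨{ toPreModel := canonPre Γ₀
     Wnonempty := ⟨⟨Γ₀, mem_canonDomain_self hΓ₀⟩⟩
     serial := fun Δ =>
       let ⟨Γ, hΓ, hΔΓ⟩ := exists_intSet_subset_of_mem_canonDomain hΓ₀ Δ.2
       ⟨⟨Γ, hΓ⟩, hΔΓ⟩
     Pnonempty := ⟨(∅ : Set ℕ)⟩
     idem := Set.union_self
     comm := Set.union_comm
     assoc := Set.union_assoc
     fusion := exists_sup_fusion (α := Set ℕ)
     upward := fun _ _ _ hab ha => hab ▸ Set.mem_union_left _ ha }, rfl⟩
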